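/- For all i, j, k ∈ ℕ the following congruences hold in the Racah algebra ℜ: if k = 0 then A^i D^j A ≡ A^{i+1} D^j modulo ℜ_{i+2j}, and if k ≥ 1 then A^i D^j B^k A ≡ A^{i+1} D^j B^k − 2k A^i D^{j+1} B^{k−1} modulo ℜ_{i+2j+k}. -/
import Mathlib


noncomputable section

/-- Generators of the Racah algebra. -/
inductive RGen : Type
  | A | B | C | D

namespace Racah

variable (F : Type) [Field F]

/-- The free algebra on the generators `A`, `B`, `C`, `D`. -/
abbrev FA := FreeAlgebra F RGen

def fA : FA F := FreeAlgebra.ι F RGen.A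
def fB : FA F := FreeAlgebra.ι F RGen.B
def fC : FA F := FreeAlgebra.ι F RGen.C
def fD : FA F := FreeAlgebra.ι F RGen.D

/-- α = [A,D] + AC − BA in the free algebra. -/
def fAl : FA F := (fA F * fD F - fD F * fA F) + fA F * fC F - fB F * fA F
/-- β = [B,D] + BA − CB in the free algebra. -/
def fBe : FA F := (fB F * fD F - fD F * fB F) + fB F * fA F - fC F * fB F
/-- γ = [C,D] + CB − AC in the free algebra. -/
def fGa : FA F := (fC F * fD F - fD F * fC F) + fC F * fB F - fA F * fC F

/-- The defining relations of the Racah algebra: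
`[A,B] = [B,C] = [C,A] = 2D` and each of `α`, `β`, `γ` commutes with each of `A`, `B`, `C`, `D`. -/
inductive Rel : FA F → FA F → Prop
  | AB : Rel (fA F * fB F - fB F * fA F) (2 * fD F)
  | BC : Rel (fB F * fC F - fC F * fB F) (2 * fD F)
  | CA : Rel (fC F * fA F - fA F * fC F) (2 * fD F)
  | cen (c x : FA F) (hc : c = fAl F ∨ c = fBe F ∨ c = fGa F)
      (hx : x = fA F ∨ x = fB F ∨ x = fC F ∨ x = fD F) :
      Rel (c * x) (x * c)

/-- The Racah algebra ℜ. -/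
abbrev R := RingQuot (Rel F)

def A : R F := RingQuot.mkAlgHom F (Rel F) (fA F)
def B : R F := RingQuot.mkAlgHom F (Rel F) (fB F)
def C : R F := RingQuot.mkAlgHom F (Rel F) (fC F)
def D : R F := RingQuot.mkAlgHom F (Rel F) (fD F)

/-- α = [A,D] + AC − BA. -/
def al : R F := (A F * D F - D F * A F) + A F * C F - B F * A F
/-- β = [B,D] + BA − CB. -/
def be : R F := (B F * D F - D F * B F) + B F * A F - C F * B F
/-- γ = [C,D] + CB − AC. -/
def ga : R F := (C F * D F - D F * C F) + C F * B F - A F * C F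
/-- δ = A + B + C. -/
def de : R F := A F + B F + C F

end Racah

namespace Racah

variable (F : Type) [Field F]

/-- The monomial `A^i D^j B^k α^r δ^s β^t`. -/
def mon (i j k r s t : ℕ) : R F :=
  A F ^ i * D F ^ j * B F ^ k * al F ^ r * de F ^ s * be F ^ t

end Racah

namespace Racah

variable (F : Type) [Field F]

/-- The subspace ℜ_n of ℜ spanned by the monomials `A^i D^j B^k α^r δ^s β^t`
with `i + 2j + k + r + s + t ≤ n`. -/
def Rn (n : ℕ) : Submodule F (R F) :=
  Submodule.span F
    {x : R F | ∃ i j k r s t : ℕ, i + 2 * j + k + r + s + t ≤ n ∧ x = mon F i j k r s t}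

end Racah


namespace Racah

variable {F : Type} [Field F]

lemma rel_AB : A F * B F - B F * A F = 2 * D F := by
  have h := RingQuot.mkAlgHom_rel F (Rel.AB (F := F))
  simpa [map_sub, map_mul, map_ofNat, A, B, D] using h

lemma rel_BC : B F * C F - C F * B F = 2 * D F := by
  have h := RingQuot.mkAlgHom_rel F (Rel.BC (F := F))
  simpa [map_sub, map_mul, map_ofNat, B, C, D] using h

lemma rel_CA : C F * A F - A F * C F = 2 * D F := by
  have h := RingQuot.mkAlgHom_rel F (Rel.CA (F := F))
  simpa [map_sub, map_mul, map_ofNat, C, A, D] using h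

lemma rel_AB' : A F * B F - B F * A F = D F + D F := by rw [rel_AB, two_mul]
lemma rel_BC' : B F * C F - C F * B F = D F + D F := by rw [rel_BC, two_mul]
lemma rel_CA' : C F * A F - A F * C F = D F + D F := by rw [rel_CA, two_mul]

lemma mk_A : RingQuot.mkAlgHom F (Rel F) (fA F) = A F := rfl
lemma mk_B : RingQuot.mkAlgHom F (Rel F) (fB F) = B F := rfl
lemma mk_C : RingQuot.mkAlgHom F (Rel F) (fC F) = C F := rfl
lemma mk_D : RingQuot.mkAlgHom F (Rel F) (fD F) = D F := rfl

lemma mk_al : RingQuot.mkAlgHom F (Rel F) (fAl F) = al F := by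
  simp [fAl, al, A, B, C, D, map_sub, map_add, map_mul]

lemma mk_be : RingQuot.mkAlgHom F (Rel F) (fBe F) = be F := by
  simp [fBe, be, A, B, C, D, map_sub, map_add, map_mul]

lemma cen_mul {c' x' : FA F} (hc : c' = fAl F ∨ c' = fBe F ∨ c' = fGa F)
    (hx : x' = fA F ∨ x' = fB F ∨ x' = fC F ∨ x' = fD F) :
    Commute (RingQuot.mkAlgHom F (Rel F) c') (RingQuot.mkAlgHom F (Rel F) x') := by
  have h := RingQuot.mkAlgHom_rel F (Rel.cen c' x' hc hx)
  simpa [Commute, SemiconjBy, map_mul] using h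

lemma cAlA : Commute (al F) (A F) := by
  have h := cen_mul (F := F) (Or.inl rfl) (Or.inl rfl); rwa [mk_al, mk_A] at h
lemma cAlB : Commute (al F) (B F) := by
  have h := cen_mul (F := F) (Or.inl rfl) (Or.inr (Or.inl rfl)); rwa [mk_al, mk_B] at h
lemma cAlC : Commute (al F) (C F) := by
  have h := cen_mul (F := F) (Or.inl rfl) (Or.inr (Or.inr (Or.inl rfl))); rwa [mk_al, mk_C] at h
lemma cAlD : Commute (al F) (D F) := by
  have h := cen_mul (F := F) (Or.inl rfl) (Or.inr (Or.inr (Or.inr rfl))); rwa [mk_al, mk_D] at h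
lemma cBeA : Commute (be F) (A F) := by
  have h := cen_mul (F := F) (Or.inr (Or.inl rfl)) (Or.inl rfl); rwa [mk_be, mk_A] at h
lemma cBeB : Commute (be F) (B F) := by
  have h := cen_mul (F := F) (Or.inr (Or.inl rfl)) (Or.inr (Or.inl rfl)); rwa [mk_be, mk_B] at h
lemma cBeC : Commute (be F) (C F) := by
  have h := cen_mul (F := F) (Or.inr (Or.inl rfl)) (Or.inr (Or.inr (Or.inl rfl))); rwa [mk_be, mk_C] at h
lemma cBeD : Commute (be F) (D F) := by
  have h := cen_mul (F := F) (Or.inr (Or.inl rfl)) (Or.inr (Or.inr (Or.inr rfl))); rwa [mk_be, mk_D] at h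

lemma cDeA : Commute (de F) (A F) := by
  unfold Commute SemiconjBy de
  linear_combination (norm := noncomm_ring) rel_CA (F := F) - rel_AB (F := F)

lemma cDeB : Commute (de F) (B F) := by
  unfold Commute SemiconjBy de
  linear_combination (norm := noncomm_ring) rel_AB (F := F) - rel_BC (F := F)

lemma cDeC : Commute (de F) (C F) := by
  unfold Commute SemiconjBy de
  linear_combination (norm := noncomm_ring) rel_BC (F := F) - rel_CA (F := F)

lemma cDeD (h2 : (2 : F) ≠ 0) : Commute (de F) (D F) := by
  have h1 : de F * (A F * B F) = (A F * B F) * de F := (cDeA.mul_right cDeB).eq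
  have h2' : de F * (B F * A F) = (B F * A F) * de F := (cDeB.mul_right cDeA).eq
  have key : de F * D F + de F * D F = D F * de F + D F * de F := by
    have e1 : de F * (A F * B F - B F * A F) = (A F * B F - B F * A F) * de F := by
      rw [mul_sub, sub_mul, h1, h2']
    rw [rel_AB'] at e1
    rw [mul_add, add_mul] at e1
    exact e1
  have hs : (2 : F) • (de F * D F) = (2 : F) • (D F * de F) := by
    rw [two_smul, two_smul]; exact key
  exact smul_right_injective _ h2 hs

lemma cAlDe : Commute (al F) (de F) :=
  ((cAlA (F := F)).add_right (cAlB (F := F))).add_right (cAlC (F := F))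

lemma cAlBe : Commute (al F) (be F) := by
  have h1 : Commute (al F) (B F * D F) := cAlB.mul_right cAlD
  have h2 : Commute (al F) (D F * B F) := cAlD.mul_right cAlB
  have h3 : Commute (al F) (B F * A F) := cAlB.mul_right cAlA
  have h4 : Commute (al F) (C F * B F) := cAlC.mul_right cAlB
  have h5 : Commute (al F) (B F * D F - D F * B F) := h1.sub_right h2
  have h6 : Commute (al F) (B F * D F - D F * B F + B F * A F) := h5.add_right h3
  have h7 : Commute (al F) (B F * D F - D F * B F + B F * A F - C F * B F) := h6.sub_right h4
  exact h7

lemma cBeDe : Commute (be F) (de F) :=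
  ((cBeA (F := F)).add_right (cBeB (F := F))).add_right (cBeC (F := F))

lemma eq_BA : B F * A F = A F * B F - (D F + D F) := by
  linear_combination (norm := noncomm_ring) -rel_AB' (F := F)

lemma eq_DA : D F * A F = A F * D F + A F * de F - A F * A F - (A F * B F + A F * B F)
    + (D F + D F) - al F := by
  unfold al de
  linear_combination (norm := noncomm_ring) rel_AB' (F := F)

lemma eq_BD : B F * D F = D F * B F + be F - (A F * B F + A F * B F) + (D F + D F)
    + de F * B F - B F * B F := by
  unfold be de
  linear_combination (norm := noncomm_ring) rel_AB' (F := F)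

lemma mon_mem {i j k r s t n : ℕ} (h : i + 2*j + k + r + s + t ≤ n) :
    mon F i j k r s t ∈ Rn F n :=
  Submodule.subset_span ⟨i, j, k, r, s, t, h, rfl⟩

lemma Rn_le {m n : ℕ} (h : m ≤ n) : Rn F m ≤ Rn F n :=
  Submodule.span_mono (fun x hx => by
    obtain ⟨i,j,k,r,s,t,hw,hx⟩ := hx
    exact ⟨i,j,k,r,s,t, hw.trans h, hx⟩)

lemma natcast_mul_mem {n c : ℕ} {x : R F} (hx : x ∈ Rn F n) : (c : R F) * x ∈ Rn F n := by
  have h : ((c:ℕ) : R F) * x = (c : F) • x := by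
    rw [Algebra.smul_def, map_natCast]
  rw [h]; exact Submodule.smul_mem _ _ hx

lemma Rn_mul_right {n m : ℕ} (z : R F)
    (hz : ∀ i j k r s t, i + 2*j + k + r + s + t ≤ n → mon F i j k r s t * z ∈ Rn F m)
    {x} (hx : x ∈ Rn F n) : x * z ∈ Rn F m := by
  induction hx using Submodule.span_induction with
  | mem x h => obtain ⟨i,j,k,r,s,t,hw,rfl⟩ := h; exact hz i j k r s t hw
  | zero => simpa using (Rn F m).zero_mem
  | add x y _ _ hx hy => rw [add_mul]; exact add_mem hx hy
  | smul a x _ hx => rw [smul_mul_assoc]; exact Submodule.smul_mem _ _ hx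

lemma cTail (x : R F) (h1 : Commute x (al F)) (h2 : Commute x (de F))
    (h3 : Commute x (be F)) (r s t : ℕ) :
    Commute x (al F ^ r * (de F ^ s * be F ^ t)) :=
  (h1.pow_right r).mul_right ((h2.pow_right s).mul_right (h3.pow_right t))

lemma mon_eq (i j k r s t : ℕ) :
    mon F i j k r s t = A F^i * D F^j * B F^k * (al F^r * (de F^s * be F^t)) := by
  simp [mon, mul_assoc]

lemma mon_mul_gen (x : R F) (h1 : Commute x (al F)) (h2 : Commute x (de F))
    (h3 : Commute x (be F)) (i j k r s t : ℕ) :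
    mon F i j k r s t * x = (A F^i * D F^j * B F^k * x) * (al F^r * (de F^s * be F^t)) := by
  rw [mon_eq, mul_assoc, (cTail x h1 h2 h3 r s t).symm.eq, ← mul_assoc]

lemma mon_mul_al (i j k r s t : ℕ) : mon F i j k r s t * al F = mon F i j k (r+1) s t := by
  rw [mon_eq, mon_eq, mul_assoc]
  congr 1
  rw [mul_assoc, ((cAlDe.pow_right s).mul_right (cAlBe.pow_right t)).symm.eq,
    ← mul_assoc, ← pow_succ]

lemma mon_mul_de (i j k r s t : ℕ) : mon F i j k r s t * de F = mon F i j k r (s+1) t := by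
  rw [mon_eq, mon_eq, mul_assoc]
  congr 1
  rw [mul_assoc, mul_assoc, (cBeDe.pow_left t).eq, ← mul_assoc (de F ^ s), ← pow_succ]

lemma mon_mul_be (i j k r s t : ℕ) : mon F i j k r s t * be F = mon F i j k r s (t+1) := by
  rw [mon_eq, mon_eq, mul_assoc]
  congr 1
  rw [mul_assoc, mul_assoc, ← pow_succ]

lemma mon_mul_B (i j k r s t : ℕ) : mon F i j k r s t * B F = mon F i j (k+1) r s t := by
  rw [mon_mul_gen (B F) cAlB.symm cDeB.symm cBeB.symm, mon_eq]
  have h : A F^i * D F^j * B F^k * B F = A F^i * D F^j * B F^(k+1) := by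
    rw [mul_assoc (A F^i * D F^j), ← pow_succ]
  rw [h]

lemma mul_al_mem {n : ℕ} {x : R F} (hx : x ∈ Rn F n) : x * al F ∈ Rn F (n+1) :=
  Rn_mul_right _ (fun i j k r s t hw => by
    rw [mon_mul_al]; exact mon_mem (by omega)) hx

lemma mul_de_mem {n : ℕ} {x : R F} (hx : x ∈ Rn F n) : x * de F ∈ Rn F (n+1) :=
  Rn_mul_right _ (fun i j k r s t hw => by
    rw [mon_mul_de]; exact mon_mem (by omega)) hx

lemma mul_be_mem {n : ℕ} {x : R F} (hx : x ∈ Rn F n) : x * be F ∈ Rn F (n+1) :=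
  Rn_mul_right _ (fun i j k r s t hw => by
    rw [mon_mul_be]; exact mon_mem (by omega)) hx

lemma mul_B_mem {n : ℕ} {x : R F} (hx : x ∈ Rn F n) : x * B F ∈ Rn F (n+1) :=
  Rn_mul_right _ (fun i j k r s t hw => by
    rw [mon_mul_B]; exact mon_mem (by omega)) hx

lemma mul_Bpow_mem {n : ℕ} (m : ℕ) {x : R F} (hx : x ∈ Rn F n) : x * B F ^ m ∈ Rn F (n+m) := by
  induction m with
  | zero => simpa using hx
  | succ m ih =>
      rw [pow_succ, ← mul_assoc]
      exact mul_B_mem ih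

lemma mul_tail_mem {n : ℕ} {x : R F} (hx : x ∈ Rn F n) (r s t : ℕ) :
    x * (al F^r * (de F^s * be F^t)) ∈ Rn F (n+r+s+t) := by
  induction r generalizing x n with
  | succ r ihr =>
      have h : x * (al F^(r+1) * (de F^s * be F^t))
          = (x * al F) * (al F^r * (de F^s * be F^t)) := by
        rw [pow_succ']
        noncomm_ring
      rw [h]
      have h2 := ihr (mul_al_mem hx)
      have h3 : n + 1 + r + s + t = n + (r+1) + s + t := by omega
      rwa [h3] at h2
  | zero =>
      simp only [pow_zero, one_mul]
      induction s generalizing x n with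
      | succ s ihs =>
          have h : x * (de F^(s+1) * be F^t) = (x * de F) * (de F^s * be F^t) := by
            rw [pow_succ']; noncomm_ring
          rw [h]
          have h2 := ihs (mul_de_mem hx)
          have h3 : n + 1 + 0 + s + t = n + 0 + (s+1) + t := by omega
          rwa [h3] at h2
      | zero =>
          simp only [pow_zero, one_mul]
          induction t generalizing x n with
          | succ t iht =>
              have h : x * be F^(t+1) = (x * be F) * be F^t := by
                rw [pow_succ']; noncomm_ring
              rw [h]
              have h2 := iht (mul_be_mem hx)
              have h3 : n + 1 + 0 + 0 + t = n + 0 + 0 + (t+1) := by omega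
              rwa [h3] at h2
          | zero => simpa using hx

end Racah


namespace Racah

variable {F : Type} [Field F]

/-- Helper: move a `B`-commuting element across a power of `B`. -/
lemma move_commuting (u x : R F) (h : Commute x (B F)) (c l : ℕ) :
    u * B F^c * x * B F^l = u * B F^(c+l) * x := by
  rw [mul_assoc (u * B F^c), (h.pow_right l).eq, ← mul_assoc, mul_assoc u, ← pow_add]

lemma mul_pow_add (u : R F) (c l : ℕ) : u * B F^c * B F^l = u * B F^(c+l) := by
  rw [mul_assoc, ← pow_add]

/-- Claim 1: `A^i D^j A ≡ A^{i+1} D^j`. -/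
def C1p (F : Type) [Field F] (i j : ℕ) : Prop :=
  A F^i * D F^j * A F - A F^(i+1) * D F^j ∈ Rn F (i + 2*j)

/-- Claim 2: `A^i D^j B^k A ≡ A^{i+1} D^j B^k - 2k A^i D^{j+1} B^{k-1}`. -/
def C2p (F : Type) [Field F] (i j k : ℕ) : Prop :=
  A F^i * D F^j * B F^k * A F -
      (A F^(i+1) * D F^j * B F^k -
        ((2*k : ℕ) : R F) * (A F^i * D F^(j+1) * B F^(k-1))) ∈ Rn F (i + 2*j + k)

/-- Claim T: `A^i D^j B^k D B^l ≡ A^i D^{j+1} B^{k+l}`. -/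
def CTp (F : Type) [Field F] (i j k l : ℕ) : Prop :=
  A F^i * D F^j * B F^k * D F * B F^l - A F^i * D F^(j+1) * B F^(k+l)
    ∈ Rn F (i + 2*j + k + l + 1)

lemma mul_A_mem {n : ℕ}
    (hC1 : ∀ i j : ℕ, i + 2*j + 1 ≤ n + 1 → C1p F i j)
    (hC2 : ∀ i j k : ℕ, 1 ≤ k → i + 2*j + k + 1 ≤ n + 1 → C2p F i j k)
    {x : R F} (hx : x ∈ Rn F n) : x * A F ∈ Rn F (n+1) := by
  refine Rn_mul_right _ (fun i j k r s t hw => ?_) hx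
  rw [mon_mul_gen (A F) cAlA.symm cDeA.symm cBeA.symm]
  rcases Nat.eq_zero_or_pos k with hk | hk
  · subst hk
    have e : A F^i * D F^j * B F^0 * A F = A F^i * D F^j * A F := by simp
    rw [e]
    have hd := hC1 i j (by omega)
    unfold C1p at hd
    rw [show A F^i * D F^j * A F
        = (A F^i * D F^j * A F - A F^(i+1) * D F^j) + A F^(i+1) * D F^j from
      (sub_add_cancel _ _).symm, add_mul]
    refine add_mem (Rn_le (by omega) (mul_tail_mem hd r s t)) ?_
    have e2 : A F^(i+1) * D F^j * (al F^r * (de F^s * be F^t)) = mon F (i+1) j 0 r s t := by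
      rw [mon_eq]; simp
    rw [e2]; exact mon_mem (by omega)
  · have hd := hC2 i j k hk (by omega)
    unfold C2p at hd
    rw [show A F^i * D F^j * B F^k * A F
        = (A F^i * D F^j * B F^k * A F -
            (A F^(i+1) * D F^j * B F^k -
              ((2*k : ℕ) : R F) * (A F^i * D F^(j+1) * B F^(k-1))))
          + (A F^(i+1) * D F^j * B F^k -
              ((2*k : ℕ) : R F) * (A F^i * D F^(j+1) * B F^(k-1))) from
      (sub_add_cancel _ _).symm, add_mul]
    refine add_mem (Rn_le (by omega) (mul_tail_mem hd r s t)) ?_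
    rw [sub_mul]
    refine sub_mem ?_ ?_
    · rw [← mon_eq]; exact mon_mem (by omega)
    · rw [mul_assoc, ← mon_eq]
      exact natcast_mul_mem (mon_mem (by omega))

lemma mul_D_mem {n : ℕ} (h2 : (2:F) ≠ 0)
    (hCT : ∀ i j k l : ℕ, i + 2*j + k + l + 2 ≤ n + 2 → CTp F i j k l)
    {x : R F} (hx : x ∈ Rn F n) : x * D F ∈ Rn F (n+2) := by
  refine Rn_mul_right _ (fun i j k r s t hw => ?_) hx
  rw [mon_mul_gen (D F) cAlD.symm (cDeD h2).symm cBeD.symm]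
  have hd := hCT i j k 0 (by omega)
  unfold CTp at hd
  simp only [pow_zero, mul_one, Nat.add_zero] at hd
  rw [show A F^i * D F^j * B F^k * D F
      = (A F^i * D F^j * B F^k * D F - A F^i * D F^(j+1) * B F^k)
        + A F^i * D F^(j+1) * B F^k from (sub_add_cancel _ _).symm, add_mul]
  refine add_mem (Rn_le (by omega) (mul_tail_mem hd r s t)) ?_
  rw [← mon_eq]; exact mon_mem (by omega)

theorem master (h2 : (2:F) ≠ 0) : ∀ n : ℕ,
    (∀ i j : ℕ, i + 2*j + 1 ≤ n → C1p F i j) ∧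
    (∀ k i j l : ℕ, i + 2*j + k + l + 2 ≤ n → CTp F i j k l) ∧
    (∀ i j k : ℕ, 1 ≤ k → i + 2*j + k + 1 ≤ n → C2p F i j k) := by
  intro n
  induction n using Nat.strong_induction_on with
  | _ n IH =>
  have hC1 : ∀ i j : ℕ, i + 2*j + 1 ≤ n → C1p F i j := by
    intro i j hw
    cases j with
    | zero => unfold C1p; simpa [pow_succ] using (Rn F (i+2*0)).zero_mem
    | succ j' =>
      obtain ⟨ih1, ihT, ih2⟩ := IH (n-1) (by omega)
      have hr : A F^i * D F^j' * A F - A F^(i+1) * D F^j' ∈ Rn F (i+2*j') := ih1 i j' (by omega)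
      have hr2 : A F^(i+1) * D F^j' * A F - A F^(i+1+1) * D F^j' ∈ Rn F ((i+1)+2*j') :=
        ih1 (i+1) j' (by omega)
      unfold C1p
      have e : A F^i * D F^j' * (D F * A F)
          = A F^i * D F^j' * (A F * D F + A F * de F - A F * A F - (A F * B F + A F * B F)
              + (D F + D F) - al F) := by rw [eq_DA]
      simp only [mul_add, mul_sub] at e
      have key : A F^i * D F^(j'+1) * A F - A F^(i+1) * D F^(j'+1)
          = (A F^i * D F^j' * A F - A F^(i+1) * D F^j') * D F
            + A F^(i+1) * D F^j' * de F
            + (A F^i * D F^j' * A F - A F^(i+1) * D F^j') * de F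
            - ((A F^(i+1) * D F^j' * A F - A F^(i+1+1) * D F^j') + A F^(i+1+1) * D F^j')
            - (A F^i * D F^j' * A F - A F^(i+1) * D F^j') * A F
            - (A F^(i+1) * D F^j' * B F + (A F^i * D F^j' * A F - A F^(i+1) * D F^j') * B F)
            - (A F^(i+1) * D F^j' * B F + (A F^i * D F^j' * A F - A F^(i+1) * D F^j') * B F)
            + A F^i * D F^(j'+1) + A F^i * D F^(j'+1)
            - A F^i * D F^j' * al F := by
        simp only [pow_succ, sub_mul, add_mul]
        linear_combination (norm := noncomm_ring) e
      rw [key]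
      have m1 : (A F^i * D F^j' * A F - A F^(i+1) * D F^j') * D F ∈ Rn F (i+2*(j'+1)) := by
        have h := mul_D_mem h2
          (fun a b c d hd => ihT c a b d (by omega)) hr
        exact Rn_le (by omega) h
      have m2 : A F^(i+1) * D F^j' * de F ∈ Rn F (i+2*(j'+1)) := by
        have e2 : A F^(i+1) * D F^j' * de F = mon F (i+1) j' 0 0 1 0 := by simp [mon]
        rw [e2]; exact mon_mem (by omega)
      have m3 : (A F^i * D F^j' * A F - A F^(i+1) * D F^j') * de F ∈ Rn F (i+2*(j'+1)) :=
        Rn_le (by omega) (mul_de_mem hr)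
      have m4 : (A F^(i+1) * D F^j' * A F - A F^(i+1+1) * D F^j') + A F^(i+1+1) * D F^j'
          ∈ Rn F (i+2*(j'+1)) := by
        refine add_mem (Rn_le (by omega) hr2) ?_
        have e2 : A F^(i+1+1) * D F^j' = mon F (i+1+1) j' 0 0 0 0 := by simp [mon]
        rw [e2]; exact mon_mem (by omega)
      have m5 : (A F^i * D F^j' * A F - A F^(i+1) * D F^j') * A F ∈ Rn F (i+2*(j'+1)) := by
        have h := mul_A_mem (n := i+2*j')
          (fun a b hb => ih1 a b (by omega))
          (fun a b c hc hb => ih2 a b c hc (by omega)) hr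
        exact Rn_le (by omega) h
      have m6 : A F^(i+1) * D F^j' * B F + (A F^i * D F^j' * A F - A F^(i+1) * D F^j') * B F
          ∈ Rn F (i+2*(j'+1)) := by
        refine add_mem ?_ (Rn_le (by omega) (mul_B_mem hr))
        have e2 : A F^(i+1) * D F^j' * B F = mon F (i+1) j' 1 0 0 0 := by simp [mon]
        rw [e2]; exact mon_mem (by omega)
      have m8 : A F^i * D F^(j'+1) ∈ Rn F (i+2*(j'+1)) := by
        have e2 : A F^i * D F^(j'+1) = mon F i (j'+1) 0 0 0 0 := by simp [mon]
        rw [e2]; exact mon_mem (by omega)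
      have m9 : A F^i * D F^j' * al F ∈ Rn F (i+2*(j'+1)) := by
        have e2 : A F^i * D F^j' * al F = mon F i j' 0 1 0 0 := by simp [mon]
        rw [e2]; exact mon_mem (by omega)
      exact sub_mem (add_mem (add_mem (sub_mem (sub_mem (sub_mem (sub_mem
        (add_mem (add_mem m1 m2) m3) m4) m5) m6) m6) m8) m8) m9
  have hCT : ∀ k i j l : ℕ, i + 2*j + k + l + 2 ≤ n → CTp F i j k l := by
    intro k
    induction k with
    | zero =>
      intro i j l hw
      unfold CTp
      have e : A F^i * D F^j * B F^0 * D F * B F^l = A F^i * D F^(j+1) * B F^(0+l) := by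
        simp [pow_succ, mul_assoc]
      rw [e]
      simpa using (Rn F (i+2*j+0+l+1)).zero_mem
    | succ k' ihk =>
      intro i j l hw
      obtain ⟨ih1, ihT, ih2⟩ := IH (n-1) (by omega)
      unfold CTp
      have hT1 := ihk i j (l+1) (by omega)
      unfold CTp at hT1
      simp only [show k' + (l+1) = k'+1+l from by omega,
        show i + 2*j + k' + (l+1) + 1 = i + 2*j + (k'+1) + l + 1 from by omega] at hT1
      have e : A F^i * D F^j * B F^k' * (B F * D F) * B F^l
          = A F^i * D F^j * B F^k' * (D F * B F + be F - (A F * B F + A F * B F)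
              + (D F + D F) + de F * B F - B F * B F) * B F^l := by rw [eq_BD]
      simp only [add_mul, sub_mul, mul_add, mul_sub] at e
      have key : A F^i * D F^j * B F^(k'+1) * D F * B F^l - A F^i * D F^(j+1) * B F^(k'+1+l)
          = (A F^i * D F^j * B F^k' * D F * B F^(l+1) - A F^i * D F^(j+1) * B F^(k'+1+l))
            + A F^i * D F^j * B F^k' * be F * B F^l
            - A F^i * D F^j * B F^k' * A F * B F^(l+1)
            - A F^i * D F^j * B F^k' * A F * B F^(l+1)
            + A F^i * D F^j * B F^k' * D F * B F^l
            + A F^i * D F^j * B F^k' * D F * B F^l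
            + A F^i * D F^j * B F^k' * de F * B F^(l+1)
            - A F^i * D F^j * B F^k' * B F * B F^(l+1) := by
        rw [pow_succ (B F) k', pow_succ' (B F) l]
        linear_combination (norm := noncomm_ring) e
      rw [key]
      set g := i + 2*j + (k'+1) + l + 1 with hg
      have m1 : A F^i * D F^j * B F^k' * D F * B F^(l+1) - A F^i * D F^(j+1) * B F^(k'+1+l)
          ∈ Rn F g := hT1
      have m2 : A F^i * D F^j * B F^k' * be F * B F^l ∈ Rn F g := by
        rw [move_commuting _ _ cBeB k' l]
        have e2 : A F^i * D F^j * B F^(k'+l) * be F = mon F i j (k'+l) 0 0 1 := by simp [mon]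
        rw [e2]; exact mon_mem (by omega)
      have m3 : A F^i * D F^j * B F^k' * A F * B F^(l+1) ∈ Rn F g := by
        rcases Nat.eq_zero_or_pos k' with hk' | hk'
        · subst hk'
          have e2 : A F^i * D F^j * B F^0 * A F = A F^i * D F^j * A F := by simp
          rw [e2]
          have hd := ih1 i j (by omega)
          rw [show A F^i * D F^j * A F
              = (A F^i * D F^j * A F - A F^(i+1) * D F^j) + A F^(i+1) * D F^j from
            (sub_add_cancel _ _).symm, add_mul]
          refine add_mem (Rn_le (by omega) (mul_Bpow_mem (l+1) hd)) ?_
          have e3 : A F^(i+1) * D F^j * B F^(l+1) = mon F (i+1) j (l+1) 0 0 0 := by simp [mon]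
          rw [e3]; exact mon_mem (by omega)
        · have hd := ih2 i j k' hk' (by omega)
          unfold C2p at hd
          rw [show A F^i * D F^j * B F^k' * A F
              = (A F^i * D F^j * B F^k' * A F -
                  (A F^(i+1) * D F^j * B F^k' -
                    ((2*k' : ℕ) : R F) * (A F^i * D F^(j+1) * B F^(k'-1))))
                + (A F^(i+1) * D F^j * B F^k' -
                    ((2*k' : ℕ) : R F) * (A F^i * D F^(j+1) * B F^(k'-1))) from
            (sub_add_cancel _ _).symm, add_mul]
          refine add_mem (Rn_le (by omega) (mul_Bpow_mem (l+1) hd)) ?_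
          rw [sub_mul]
          refine sub_mem ?_ ?_
          · rw [mul_pow_add]
            have e3 : A F^(i+1) * D F^j * B F^(k'+(l+1)) = mon F (i+1) j (k'+(l+1)) 0 0 0 := by
              simp [mon]
            rw [e3]; exact mon_mem (by omega)
          · rw [mul_assoc, mul_pow_add]
            have e3 : A F^i * D F^(j+1) * B F^((k'-1)+(l+1))
                = mon F i (j+1) ((k'-1)+(l+1)) 0 0 0 := by simp [mon]
            rw [e3]; exact natcast_mul_mem (mon_mem (by omega))
      have m4 : A F^i * D F^j * B F^k' * D F * B F^l ∈ Rn F g := by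
        have hd := ihT k' i j l (by omega)
        unfold CTp at hd
        rw [show A F^i * D F^j * B F^k' * D F * B F^l
            = (A F^i * D F^j * B F^k' * D F * B F^l - A F^i * D F^(j+1) * B F^(k'+l))
              + A F^i * D F^(j+1) * B F^(k'+l) from (sub_add_cancel _ _).symm]
        refine add_mem (Rn_le (by omega) hd) ?_
        have e2 : A F^i * D F^(j+1) * B F^(k'+l) = mon F i (j+1) (k'+l) 0 0 0 := by simp [mon]
        rw [e2]; exact mon_mem (by omega)
      have m5 : A F^i * D F^j * B F^k' * de F * B F^(l+1) ∈ Rn F g := by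
        rw [move_commuting _ _ cDeB k' (l+1)]
        have e2 : A F^i * D F^j * B F^(k'+(l+1)) * de F = mon F i j (k'+(l+1)) 0 1 0 := by
          simp [mon]
        rw [e2]; exact mon_mem (by omega)
      have m6 : A F^i * D F^j * B F^k' * B F * B F^(l+1) ∈ Rn F g := by
        rw [show A F^i * D F^j * B F^k' * B F = A F^i * D F^j * B F^(k'+1) from by
          rw [mul_assoc (A F^i * D F^j), ← pow_succ], mul_pow_add]
        have e2 : A F^i * D F^j * B F^((k'+1)+(l+1)) = mon F i j ((k'+1)+(l+1)) 0 0 0 := by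
          simp [mon]
        rw [e2]; exact mon_mem (by omega)
      exact sub_mem (add_mem (add_mem (add_mem (sub_mem (sub_mem (add_mem m1 m2) m3) m3)
        m4) m4) m5) m6
  have hC2 : ∀ i j k : ℕ, 1 ≤ k → i + 2*j + k + 1 ≤ n → C2p F i j k := by
    intro i j k hk hw
    obtain ⟨k', rfl⟩ : ∃ k'', k = k''+1 := ⟨k-1, by omega⟩
    obtain ⟨ih1, ihT, ih2⟩ := IH (n-1) (by omega)
    have hT := hCT k' i j 0 (by omega)
    unfold CTp at hT
    simp only [pow_zero, mul_one, Nat.add_zero] at hT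
    unfold C2p
    simp only [Nat.add_sub_cancel]
    have e : A F^i * D F^j * B F^k' * (B F * A F)
        = A F^i * D F^j * B F^k' * (A F * B F - (D F + D F)) := by rw [eq_BA]
    rcases Nat.eq_zero_or_pos k' with hk' | hk'
    · subst hk'
      have hd := ih1 i j (by omega)
      simp only [pow_zero, mul_one] at hT e
      simp only [mul_sub, mul_add] at e
      have key : A F^i * D F^j * B F^(0+1) * A F -
          (A F^(i+1) * D F^j * B F^(0+1) -
            ((2*(0+1) : ℕ) : R F) * (A F^i * D F^(j+1) * B F^0))
          = (A F^i * D F^j * A F - A F^(i+1) * D F^j) * B F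
            - (A F^i * D F^j * D F - A F^i * D F^(j+1))
            - (A F^i * D F^j * D F - A F^i * D F^(j+1)) := by
        have hc : ((2*(0+1) : ℕ) : R F) = 2 := by norm_num
        rw [hc]
        simp only [pow_zero, pow_succ, one_mul, mul_one, Nat.zero_add, sub_mul, add_mul]
        linear_combination (norm := noncomm_ring) e
      rw [key]
      exact sub_mem (sub_mem (Rn_le (by omega) (mul_B_mem hd)) (Rn_le (by omega) hT))
        (Rn_le (by omega) hT)
    · obtain ⟨m, rfl⟩ : ∃ m, k' = m+1 := ⟨k'-1, by omega⟩
      have hd := ih2 i j (m+1) (by omega) (by omega)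
      unfold C2p at hd
      simp only [Nat.add_sub_cancel] at hd
      have hc : ((2*(m+1+1) : ℕ) : R F) = ((2*(m+1) : ℕ) : R F) + 2 := by
        rw [show 2*(m+1+1) = 2*(m+1) + 2 from by omega, Nat.cast_add]
        norm_num
      rw [hc]
      simp only [mul_sub, mul_add] at e
      have key : A F^i * D F^j * B F^(m+1+1) * A F -
          (A F^(i+1) * D F^j * B F^(m+1+1) -
            (((2*(m+1) : ℕ) : R F) + 2) * (A F^i * D F^(j+1) * B F^(m+1)))
          = (A F^i * D F^j * B F^(m+1) * A F -
              (A F^(i+1) * D F^j * B F^(m+1) -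
                ((2*(m+1) : ℕ) : R F) * (A F^i * D F^(j+1) * B F^m))) * B F
            - (A F^i * D F^j * B F^(m+1) * D F - A F^i * D F^(j+1) * B F^(m+1))
            - (A F^i * D F^j * B F^(m+1) * D F - A F^i * D F^(j+1) * B F^(m+1)) := by
        rw [pow_succ (B F) (m+1), pow_succ (B F) m]
        simp only [sub_mul, add_mul]
        linear_combination (norm := noncomm_ring) e
      rw [key]
      exact sub_mem (sub_mem (Rn_le (by omega) (mul_B_mem hd)) (Rn_le (by omega) hT))
        (Rn_le (by omega) hT)
  exact ⟨hC1, hCT, hC2⟩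

end Racah

open Racah in
/-- for i,j,k ∈ ℕ: `A^i D^j A ≡ A^{i+1} D^j (mod ℜ_{i+2j})`, and for `k ≥ 1`,
`A^i D^j B^k A ≡ A^{i+1} D^j B^k − 2k A^i D^{j+1} B^{k−1} (mod ℜ_{i+2j+k})`. -/
theorem stmt13 (F : Type) [Field F] (h2 : (2 : F) ≠ 0) (i j k : ℕ) :
    (Racah.A F ^ i * Racah.D F ^ j * Racah.A F - Racah.A F ^ (i + 1) * Racah.D F ^ j
      ∈ Rn F (i + 2 * j)) ∧
    (k ≥ 1 →
      Racah.A F ^ i * Racah.D F ^ j * Racah.B F ^ k * Racah.A F -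
        (Racah.A F ^ (i + 1) * Racah.D F ^ j * Racah.B F ^ k -
          ((2 * k : ℕ) : Racah.R F) *
            (Racah.A F ^ i * Racah.D F ^ (j + 1) * Racah.B F ^ (k - 1)))
        ∈ Rn F (i + 2 * j + k)) := by
  constructor
  · have h := (Racah.master h2 (i + 2*j + 1)).1 i j le_rfl
    unfold Racah.C1p at h
    exact h
  · intro hk
    have h := (Racah.master h2 (i + 2*j + k + 1)).2.2 i j k hk le_rfl
    unfold Racah.C2p at h
    exact h
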